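/- arXiv:2211.01793 — 2 statements merged into one kernel-verified Lean document; each statement's English description precedes it below -/
import Mathlib

section
/- Let D ⊆ ℝⁿ, f : D → ℝⁿ, f measurable, h : D → Y with Y finite, and suppose the strongest ℓ-complete abstraction of the induced transition system is deterministic, i.e., for every realizable ℓ-sequence s = y₁…y_ℓ there is exactly one y′ ∈ Y such that y₂…y_ℓ y′ is realizable. Then for every realizable ℓ-sequence s and every y ∈ Y, the set Pre_D([s]) ∩ [y] (points in the output class of y whose image under f lies in [s]) is either empty or equals the full equivalence class [y·y₁…y_{ℓ-1}] of the ℓ-sequence y·y₁…y_{ℓ-1}. -/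
/-- Equivalence class of an `ℓ`-sequence of outputs. -/
def eqCls {α Y : Type*} (f : α → α) (h : α → Y) {ℓ : ℕ} (s : Fin ℓ → Y) : Set α :=
  {x | ∀ j : Fin ℓ, h (f^[(j : ℕ)] x) = s j}

/-
Prepending an output to a sequence amounts to applying `h` and then `f`, so
`f ⁻¹' [s] ∩ [y]` is the class of `y·s`, which refines `[y·y₁…y_{ℓ-1}]` by one extra output.
Determinism says that on a realizable class this extra output is the same at every point, so
as soon as one point of `[y·y₁…y_{ℓ-1}]` lands in `[s]`, all of them do.
-/

section EqCls

variable {α Y : Type*} (f : α → α) (h : α → Y) {n : ℕ}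

theorem mem_eqCls_cons_iff (y : Y) (t : Fin n → Y) (x : α) :
    x ∈ eqCls f h (Fin.cons y t) ↔ h x = y ∧ f x ∈ eqCls f h t := by
  simp only [eqCls, Set.mem_ofPred_eq, Fin.forall_fin_succ, Fin.cons_zero, Fin.cons_succ,
    Fin.val_zero, Function.iterate_zero_apply, Fin.val_succ, Function.iterate_succ_apply]

theorem mem_eqCls_snoc_iff (t : Fin n → Y) (y : Y) (x : α) :
    x ∈ eqCls f h (Fin.snoc t y) ↔ x ∈ eqCls f h t ∧ h (f^[n] x) = y := by
  simp only [eqCls, Set.mem_ofPred_eq, Fin.forall_fin_succ', Fin.snoc_castSucc, Fin.snoc_last,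
    Fin.val_castSucc, Fin.val_last]

theorem eqCls_snoc_subset (t : Fin n → Y) (y : Y) : eqCls f h (Fin.snoc t y) ⊆ eqCls f h t :=
  fun x hx => ((mem_eqCls_snoc_iff f h t y x).1 hx).1

theorem preimage_eqCls_inter_eq_eqCls_cons (t : Fin n → Y) (y : Y) :
    f ⁻¹' eqCls f h t ∩ {x | h x = y} = eqCls f h (Fin.cons y t) := by
  ext x
  rw [mem_eqCls_cons_iff]
  exact and_comm

theorem eqCls_snoc_eq_of_nonempty {t : Fin n → Y}
    (hdet : ∀ y' y'' : Y, (eqCls f h (Fin.snoc t y')).Nonempty →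
      (eqCls f h (Fin.snoc t y'')).Nonempty → y' = y'')
    {y : Y} (hy : (eqCls f h (Fin.snoc t y)).Nonempty) :
    eqCls f h (Fin.snoc t y) = eqCls f h t := by
  refine (eqCls_snoc_subset f h t y).antisymm ?_
  intro x hx
  have hx' : x ∈ eqCls f h (Fin.snoc t (h (f^[n] x))) :=
    (mem_eqCls_snoc_iff f h t _ x).2 ⟨hx, rfl⟩
  rwa [hdet _ _ ⟨x, hx'⟩ hy] at hx'

end EqCls

theorem stmt_18_general {α Y : Type*} (f : α → α) (h : α → Y) (m : ℕ)
    (hdet : ∀ (s : Fin (m + 1) → Y), (eqCls f h s).Nonempty →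
      ∀ y' y'' : Y, (eqCls f h (Fin.snoc s y')).Nonempty →
        (eqCls f h (Fin.snoc s y'')).Nonempty → y' = y'') :
    ∀ (s : Fin (m + 1) → Y), (eqCls f h s).Nonempty → ∀ y : Y,
      (f ⁻¹' eqCls f h s ∩ {x | h x = y} = ∅) ∨
      (f ⁻¹' eqCls f h s ∩ {x | h x = y} = eqCls f h (Fin.cons y (Fin.init s))) := by
  intro s _ y
  set t : Fin (m + 1) → Y := Fin.cons y (Fin.init s)
  have hcls : f ⁻¹' eqCls f h s ∩ {x | h x = y} = eqCls f h (Fin.snoc t (s (Fin.last m))) := by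
    rw [preimage_eqCls_inter_eq_eqCls_cons, ← Fin.cons_snoc_eq_snoc_cons, Fin.snoc_init_self]
  rw [hcls]
  refine (Set.eq_empty_or_nonempty _).imp_right fun hne => ?_
  have ht : (eqCls f h t).Nonempty := hne.mono (eqCls_snoc_subset f h t _)
  exact eqCls_snoc_eq_of_nonempty f h (hdet t ht) hne

/-- If the strongest `ℓ`-complete abstraction is deterministic (realizable one-symbol
extensions of a realizable `ℓ`-sequence are unique), then for every realizable
`ℓ`-sequence `s` and output `y`, the set `Pre([s]) ∩ [y]` is either empty or equal to the
full equivalence class `[y·y₁…y_{ℓ-1}]`. -/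
theorem stmt_18 {α Y : Type*} [Finite Y] (f : α → α) (h : α → Y) (m : ℕ)
    (hdet : ∀ (s : Fin (m + 1) → Y), (eqCls f h s).Nonempty →
      ∀ y' y'' : Y, (eqCls f h (Fin.snoc s y')).Nonempty →
        (eqCls f h (Fin.snoc s y'')).Nonempty → y' = y'') :
    ∀ (s : Fin (m + 1) → Y), (eqCls f h s).Nonempty → ∀ y : Y,
      (f ⁻¹' eqCls f h s ∩ {x | h x = y} = ∅) ∨
      (f ⁻¹' eqCls f h s ∩ {x | h x = y} = eqCls f h (Fin.cons y (Fin.init s))) :=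
  stmt_18_general f h m hdet
end

section
/- Let f be the map on [0,1] given by f(x) = x/2 on (λ, 1] and f(x) = x/2 + 1/2 on [0, λ], with λ = 10^{-2}, partition P_i = (2^{-i}, 2^{-i+1}] for i = 1,…,4 and P₅ = [0, 2^{-4}], and output h(x) = i for x ∈ P_i. Define Pre^k of a set S as the set of x whose k-th iterate lies in S. Then for every union S of equivalence classes of 2-sequences with nonzero Lebesgue measure, ⋃_{i=0}^{7} Pre^i(S) = ⋃_{i=0}^{k} Pre^i(S) for all k ≥ 7; i.e., the increasing union of preimage sets stabilizes after 7 steps (up to Lebesgue-null sets). -/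
open MeasureTheory
open scoped symmDiff

set_option maxHeartbeats 2000000 in
/-- For the hybrid map with `λ = 10⁻²` and the dyadic 5-cell partition of `[0,1]`,
the increasing unions `⋃_{i ≤ k} Pre^i(S)` of preimages of any positive-measure union `S`
of equivalence classes of 2-sequences stabilize after 7 steps, up to Lebesgue-null sets. -/
theorem stmt_19 (l : ℝ) (hl : l = 10 ^ (-2 : ℤ))
    (f : ℝ → ℝ) (hf : ∀ x, f x = if x ≤ l then x / 2 + 1 / 2 else x / 2)
    (h : ℝ → ℕ)
    (hh1 : ∀ x ∈ Set.Ioc ((2:ℝ)^(-1 : ℤ)) ((2:ℝ)^(0 : ℤ)), h x = 1)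
    (hh2 : ∀ x ∈ Set.Ioc ((2:ℝ)^(-2 : ℤ)) ((2:ℝ)^(-1 : ℤ)), h x = 2)
    (hh3 : ∀ x ∈ Set.Ioc ((2:ℝ)^(-3 : ℤ)) ((2:ℝ)^(-2 : ℤ)), h x = 3)
    (hh4 : ∀ x ∈ Set.Ioc ((2:ℝ)^(-4 : ℤ)) ((2:ℝ)^(-3 : ℤ)), h x = 4)
    (hh5 : ∀ x ∈ Set.Icc (0 : ℝ) ((2:ℝ)^(-4 : ℤ)), h x = 5)
    (S : Set ℝ) (T : Set (ℕ × ℕ))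
    (hS : S = ⋃ p ∈ T, {x ∈ Set.Icc (0:ℝ) 1 | h x = p.1 ∧ h (f x) = p.2})
    (hpos : ∀ p ∈ T, volume {x ∈ Set.Icc (0:ℝ) 1 | h x = p.1 ∧ h (f x) = p.2} ≠ 0)
    (k : ℕ) (hk : 7 ≤ k) :
    volume ((⋃ i ≤ 7, {x ∈ Set.Icc (0:ℝ) 1 | f^[i] x ∈ S}) ∆
            (⋃ i ≤ k, {x ∈ Set.Icc (0:ℝ) 1 | f^[i] x ∈ S})) = 0 := by
  norm_num at hh1 hh2 hh3 hh4 hh5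
  have hl100 : l = 1/100 := by rw [hl]; norm_num
  clear hl
  subst hl100
  -- basic step lemmas
  have fhigh : ∀ y : ℝ, 1/100 < y → f y = y / 2 := fun y hy => by
    rw [hf]; exact if_neg (not_le.mpr hy)
  have flow : ∀ y : ℝ, y ≤ 1/100 → f y = y / 2 + 1 / 2 := fun y hy => by
    rw [hf]; exact if_pos hy
  have step : ∀ (y : ℝ) (n : ℕ), f^[n+1] y = f (f^[n] y) :=
    fun y n => Function.iterate_succ_apply' f n y
  -- pair classification lemmas
  have c12 : ∀ y : ℝ, 1/2 < y → y ≤ 1 → h y = 1 ∧ h (f y) = 2 := by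
    intro y a b
    rw [fhigh y (by linarith)]
    exact ⟨hh1 y a b, hh2 _ (by linarith) (by linarith)⟩
  have c23 : ∀ y : ℝ, 1/4 < y → y ≤ 1/2 → h y = 2 ∧ h (f y) = 3 := by
    intro y a b
    rw [fhigh y (by linarith)]
    exact ⟨hh2 y a b, hh3 _ (by linarith) (by linarith)⟩
  have c34 : ∀ y : ℝ, 1/8 < y → y ≤ 1/4 → h y = 3 ∧ h (f y) = 4 := by
    intro y a b
    rw [fhigh y (by linarith)]
    exact ⟨hh3 y a b, hh4 _ (by linarith) (by linarith)⟩
  have c45 : ∀ y : ℝ, 1/16 < y → y ≤ 1/8 → h y = 4 ∧ h (f y) = 5 := by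
    intro y a b
    rw [fhigh y (by linarith)]
    exact ⟨hh4 y a b, hh5 _ (by linarith) (by linarith)⟩
  have c55 : ∀ y : ℝ, 1/100 < y → y ≤ 1/16 → h y = 5 ∧ h (f y) = 5 := by
    intro y a b
    rw [fhigh y (by linarith)]
    exact ⟨hh5 y (by linarith) b, hh5 _ (by linarith) (by linarith)⟩
  have c51 : ∀ y : ℝ, 0 < y → y ≤ 1/100 → h y = 5 ∧ h (f y) = 1 := by
    intro y a b
    rw [flow y b]
    exact ⟨hh5 y (by linarith) (by linarith), hh1 _ (by linarith) (by linarith)⟩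
  -- classification of all points of (0,1]
  have classify : ∀ y : ℝ, 0 < y → y ≤ 1 →
      (h y = 1 ∧ h (f y) = 2) ∨ (h y = 2 ∧ h (f y) = 3) ∨ (h y = 3 ∧ h (f y) = 4) ∨
      (h y = 4 ∧ h (f y) = 5) ∨ (h y = 5 ∧ h (f y) = 5) ∨ (h y = 5 ∧ h (f y) = 1) := by
    intro y a b
    rcases le_or_gt y (1/100) with c|c
    · exact Or.inr (Or.inr (Or.inr (Or.inr (Or.inr (c51 y a c)))))
    rcases le_or_gt y (1/16) with d|d
    · exact Or.inr (Or.inr (Or.inr (Or.inr (Or.inl (c55 y c d)))))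
    rcases le_or_gt y (1/8) with e|e
    · exact Or.inr (Or.inr (Or.inr (Or.inl (c45 y d e))))
    rcases le_or_gt y (1/4) with g|g
    · exact Or.inr (Or.inr (Or.inl (c34 y e g)))
    rcases le_or_gt y (1/2) with i|i
    · exact Or.inr (Or.inl (c23 y g i))
    · exact Or.inl (c12 y i b)
  -- tail orbit lemma: from (0, 1/100]
  have tail : ∀ z : ℝ, 0 < z → z ≤ 1/100 →
      f^[1] z ∈ Set.Ioc (1/2:ℝ) 1 ∧ f^[2] z ∈ Set.Ioc (1/4:ℝ) (1/2) ∧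
      f^[3] z ∈ Set.Ioc (1/8:ℝ) (1/4) ∧ f^[4] z ∈ Set.Ioc (1/16:ℝ) (1/8) ∧
      f^[5] z ∈ Set.Ioc (1/100:ℝ) (1/16) := by
    intro z a b
    have e1 : f^[1] z = z/2 + 1/2 := by rw [Function.iterate_one]; exact flow z b
    have e2 : f^[2] z = z/4 + 1/4 := by
      rw [step, e1, fhigh _ (by linarith)]; ring
    have e3 : f^[3] z = z/8 + 1/8 := by
      rw [step, e2, fhigh _ (by linarith)]; ring
    have e4 : f^[4] z = z/16 + 1/16 := by
      rw [step, e3, fhigh _ (by linarith)]; ring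
    have e5 : f^[5] z = z/32 + 1/32 := by
      rw [step, e4, fhigh _ (by linarith)]; ring
    refine ⟨⟨?_, ?_⟩, ⟨?_, ?_⟩, ⟨?_, ?_⟩, ⟨?_, ?_⟩, ⟨?_, ?_⟩⟩ <;>
      simp only [e1, e2, e3, e4, e5] <;> linarith
  -- the key lemma: every point of (0,1] visits every region within 7 steps
  have key : ∀ x : ℝ, 0 < x → x ≤ 1 →
      (∃ i ≤ 7, f^[i] x ∈ Set.Ioc (1/2:ℝ) 1) ∧
      (∃ i ≤ 7, f^[i] x ∈ Set.Ioc (1/4:ℝ) (1/2)) ∧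
      (∃ i ≤ 7, f^[i] x ∈ Set.Ioc (1/8:ℝ) (1/4)) ∧
      (∃ i ≤ 7, f^[i] x ∈ Set.Ioc (1/16:ℝ) (1/8)) ∧
      (∃ i ≤ 7, f^[i] x ∈ Set.Ioc (1/100:ℝ) (1/16)) ∧
      (∃ i ≤ 7, f^[i] x ∈ Set.Ioc (0:ℝ) (1/100)) := by
    intro x a b
    have e0 : f^[0] x = x := rfl
    rcases le_or_gt x (1/100) with c|c
    · -- region (0, 1/100]
      obtain ⟨t1, t2, t3, t4, t5⟩ := tail x a c
      exact ⟨⟨1, by norm_num, t1⟩, ⟨2, by norm_num, t2⟩, ⟨3, by norm_num, t3⟩,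
        ⟨4, by norm_num, t4⟩, ⟨5, by norm_num, t5⟩, ⟨0, by norm_num, ⟨a, c⟩⟩⟩
    rcases le_or_gt x (1/16) with d|d
    · -- region (1/100, 1/16]
      have e1 : f^[1] x = x/2 := by rw [Function.iterate_one]; exact fhigh x c
      rcases le_or_gt (x/2) (1/100) with s1|s1
      · have comp : ∀ m : ℕ, f^[m + 1] x = f^[m] (x/2) := fun m => by
          rw [Function.iterate_add_apply, e1]
        obtain ⟨t1, t2, t3, t4, _⟩ := tail (x/2) (by linarith) s1
        exact ⟨⟨1+1, by norm_num, by rw [comp 1]; exact t1⟩,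
          ⟨2+1, by norm_num, by rw [comp 2]; exact t2⟩,
          ⟨3+1, by norm_num, by rw [comp 3]; exact t3⟩,
          ⟨4+1, by norm_num, by rw [comp 4]; exact t4⟩,
          ⟨0, by norm_num, ⟨c, d⟩⟩,
          ⟨1, by norm_num, by rw [e1]; exact ⟨by linarith, s1⟩⟩⟩
      have e2 : f^[2] x = x/4 := by rw [step, e1, fhigh _ s1]; ring
      rcases le_or_gt (x/4) (1/100) with s2|s2
      · have comp : ∀ m : ℕ, f^[m + 2] x = f^[m] (x/4) := fun m => by
          rw [Function.iterate_add_apply, e2]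
        obtain ⟨t1, t2, t3, t4, _⟩ := tail (x/4) (by linarith) s2
        exact ⟨⟨1+2, by norm_num, by rw [comp 1]; exact t1⟩,
          ⟨2+2, by norm_num, by rw [comp 2]; exact t2⟩,
          ⟨3+2, by norm_num, by rw [comp 3]; exact t3⟩,
          ⟨4+2, by norm_num, by rw [comp 4]; exact t4⟩,
          ⟨0, by norm_num, ⟨c, d⟩⟩,
          ⟨2, by norm_num, by rw [e2]; exact ⟨by linarith, s2⟩⟩⟩
      · have e3 : f^[3] x = x/8 := by rw [step, e2, fhigh _ s2]; ring
        have s3 : x/8 ≤ 1/100 := by linarith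
        have comp : ∀ m : ℕ, f^[m + 3] x = f^[m] (x/8) := fun m => by
          rw [Function.iterate_add_apply, e3]
        obtain ⟨t1, t2, t3, t4, _⟩ := tail (x/8) (by linarith) s3
        exact ⟨⟨1+3, by norm_num, by rw [comp 1]; exact t1⟩,
          ⟨2+3, by norm_num, by rw [comp 2]; exact t2⟩,
          ⟨3+3, by norm_num, by rw [comp 3]; exact t3⟩,
          ⟨4+3, by norm_num, by rw [comp 4]; exact t4⟩,
          ⟨0, by norm_num, ⟨c, d⟩⟩,
          ⟨3, by norm_num, by rw [e3]; exact ⟨by linarith, s3⟩⟩⟩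
    rcases le_or_gt x (1/8) with e|e
    · -- region (1/16, 1/8]
      have e1 : f^[1] x = x/2 := by rw [Function.iterate_one]; exact fhigh x (by linarith)
      have e2 : f^[2] x = x/4 := by rw [step, e1, fhigh _ (by linarith)]; ring
      have e3 : f^[3] x = x/8 := by rw [step, e2, fhigh _ (by linarith)]; ring
      rcases le_or_gt (x/8) (1/100) with s1|s1
      · have comp : ∀ m : ℕ, f^[m + 3] x = f^[m] (x/8) := fun m => by
          rw [Function.iterate_add_apply, e3]
        obtain ⟨t1, t2, t3, _, _⟩ := tail (x/8) (by linarith) s1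
        exact ⟨⟨1+3, by norm_num, by rw [comp 1]; exact t1⟩,
          ⟨2+3, by norm_num, by rw [comp 2]; exact t2⟩,
          ⟨3+3, by norm_num, by rw [comp 3]; exact t3⟩,
          ⟨0, by norm_num, ⟨d, e⟩⟩,
          ⟨1, by norm_num, by rw [e1]; exact ⟨by linarith, by linarith⟩⟩,
          ⟨3, by norm_num, by rw [e3]; exact ⟨by linarith, s1⟩⟩⟩
      · have e4 : f^[4] x = x/16 := by rw [step, e3, fhigh _ s1]; ring
        have s2 : x/16 ≤ 1/100 := by linarith
        have comp : ∀ m : ℕ, f^[m + 4] x = f^[m] (x/16) := fun m => by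
          rw [Function.iterate_add_apply, e4]
        obtain ⟨t1, t2, t3, _, _⟩ := tail (x/16) (by linarith) s2
        exact ⟨⟨1+4, by norm_num, by rw [comp 1]; exact t1⟩,
          ⟨2+4, by norm_num, by rw [comp 2]; exact t2⟩,
          ⟨3+4, by norm_num, by rw [comp 3]; exact t3⟩,
          ⟨0, by norm_num, ⟨d, e⟩⟩,
          ⟨1, by norm_num, by rw [e1]; exact ⟨by linarith, by linarith⟩⟩,
          ⟨4, by norm_num, by rw [e4]; exact ⟨by linarith, s2⟩⟩⟩
    rcases le_or_gt x (1/4) with g|g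
    · -- region (1/8, 1/4]
      have e1 : f^[1] x = x/2 := by rw [Function.iterate_one]; exact fhigh x (by linarith)
      have e2 : f^[2] x = x/4 := by rw [step, e1, fhigh _ (by linarith)]; ring
      have e3 : f^[3] x = x/8 := by rw [step, e2, fhigh _ (by linarith)]; ring
      have e4 : f^[4] x = x/16 := by rw [step, e3, fhigh _ (by linarith)]; ring
      rcases le_or_gt (x/16) (1/100) with s1|s1
      · have comp : ∀ m : ℕ, f^[m + 4] x = f^[m] (x/16) := fun m => by
          rw [Function.iterate_add_apply, e4]
        obtain ⟨t1, t2, _, _, _⟩ := tail (x/16) (by linarith) s1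
        exact ⟨⟨1+4, by norm_num, by rw [comp 1]; exact t1⟩,
          ⟨2+4, by norm_num, by rw [comp 2]; exact t2⟩,
          ⟨0, by norm_num, ⟨e, g⟩⟩,
          ⟨1, by norm_num, by rw [e1]; exact ⟨by linarith, by linarith⟩⟩,
          ⟨2, by norm_num, by rw [e2]; exact ⟨by linarith, by linarith⟩⟩,
          ⟨4, by norm_num, by rw [e4]; exact ⟨by linarith, s1⟩⟩⟩
      · have e5 : f^[5] x = x/32 := by rw [step, e4, fhigh _ s1]; ring
        have s2 : x/32 ≤ 1/100 := by linarith
        have comp : ∀ m : ℕ, f^[m + 5] x = f^[m] (x/32) := fun m => by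
          rw [Function.iterate_add_apply, e5]
        obtain ⟨t1, t2, _, _, _⟩ := tail (x/32) (by linarith) s2
        exact ⟨⟨1+5, by norm_num, by rw [comp 1]; exact t1⟩,
          ⟨2+5, by norm_num, by rw [comp 2]; exact t2⟩,
          ⟨0, by norm_num, ⟨e, g⟩⟩,
          ⟨1, by norm_num, by rw [e1]; exact ⟨by linarith, by linarith⟩⟩,
          ⟨2, by norm_num, by rw [e2]; exact ⟨by linarith, by linarith⟩⟩,
          ⟨5, by norm_num, by rw [e5]; exact ⟨by linarith, s2⟩⟩⟩
    rcases le_or_gt x (1/2) with i|i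
    · -- region (1/4, 1/2]
      have e1 : f^[1] x = x/2 := by rw [Function.iterate_one]; exact fhigh x (by linarith)
      have e2 : f^[2] x = x/4 := by rw [step, e1, fhigh _ (by linarith)]; ring
      have e3 : f^[3] x = x/8 := by rw [step, e2, fhigh _ (by linarith)]; ring
      have e4 : f^[4] x = x/16 := by rw [step, e3, fhigh _ (by linarith)]; ring
      have e5 : f^[5] x = x/32 := by rw [step, e4, fhigh _ (by linarith)]; ring
      rcases le_or_gt (x/32) (1/100) with s1|s1
      · have comp : ∀ m : ℕ, f^[m + 5] x = f^[m] (x/32) := fun m => by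
          rw [Function.iterate_add_apply, e5]
        obtain ⟨t1, _, _, _, _⟩ := tail (x/32) (by linarith) s1
        exact ⟨⟨1+5, by norm_num, by rw [comp 1]; exact t1⟩,
          ⟨0, by norm_num, ⟨g, i⟩⟩,
          ⟨1, by norm_num, by rw [e1]; exact ⟨by linarith, by linarith⟩⟩,
          ⟨2, by norm_num, by rw [e2]; exact ⟨by linarith, by linarith⟩⟩,
          ⟨3, by norm_num, by rw [e3]; exact ⟨by linarith, by linarith⟩⟩,
          ⟨5, by norm_num, by rw [e5]; exact ⟨by linarith, s1⟩⟩⟩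
      · have e6 : f^[6] x = x/64 := by rw [step, e5, fhigh _ s1]; ring
        have s2 : x/64 ≤ 1/100 := by linarith
        have comp : ∀ m : ℕ, f^[m + 6] x = f^[m] (x/64) := fun m => by
          rw [Function.iterate_add_apply, e6]
        obtain ⟨t1, _, _, _, _⟩ := tail (x/64) (by linarith) s2
        exact ⟨⟨1+6, by norm_num, by rw [comp 1]; exact t1⟩,
          ⟨0, by norm_num, ⟨g, i⟩⟩,
          ⟨1, by norm_num, by rw [e1]; exact ⟨by linarith, by linarith⟩⟩,
          ⟨2, by norm_num, by rw [e2]; exact ⟨by linarith, by linarith⟩⟩,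
          ⟨3, by norm_num, by rw [e3]; exact ⟨by linarith, by linarith⟩⟩,
          ⟨6, by norm_num, by rw [e6]; exact ⟨by linarith, s2⟩⟩⟩
    · -- region (1/2, 1]
      have e1 : f^[1] x = x/2 := by rw [Function.iterate_one]; exact fhigh x (by linarith)
      have e2 : f^[2] x = x/4 := by rw [step, e1, fhigh _ (by linarith)]; ring
      have e3 : f^[3] x = x/8 := by rw [step, e2, fhigh _ (by linarith)]; ring
      have e4 : f^[4] x = x/16 := by rw [step, e3, fhigh _ (by linarith)]; ring
      have e5 : f^[5] x = x/32 := by rw [step, e4, fhigh _ (by linarith)]; ring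
      have e6 : f^[6] x = x/64 := by rw [step, e5, fhigh _ (by linarith)]; ring
      refine ⟨⟨0, by norm_num, ⟨i, b⟩⟩,
        ⟨1, by norm_num, by rw [e1]; exact ⟨by linarith, by linarith⟩⟩,
        ⟨2, by norm_num, by rw [e2]; exact ⟨by linarith, by linarith⟩⟩,
        ⟨3, by norm_num, by rw [e3]; exact ⟨by linarith, by linarith⟩⟩,
        ⟨4, by norm_num, by rw [e4]; exact ⟨by linarith, by linarith⟩⟩, ?_⟩
      rcases le_or_gt (x/64) (1/100) with s1|s1
      · exact ⟨6, by norm_num, by rw [e6]; exact ⟨by linarith, s1⟩⟩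
      · have e7 : f^[7] x = x/128 := by rw [step, e6, fhigh _ s1]; ring
        exact ⟨7, by norm_num, by rw [e7]; exact ⟨by linarith, by linarith⟩⟩
  -- every p ∈ T is one of the six admissible pairs
  have hp6 : ∀ p ∈ T, p = (1,2) ∨ p = (2,3) ∨ p = (3,4) ∨ p = (4,5) ∨ p = (5,5) ∨ p = (5,1) := by
    intro p hp
    by_contra hnot
    push_neg at hnot
    obtain ⟨n1, n2, n3, n4, n5, n6⟩ := hnot
    apply hpos p hp
    apply measure_mono_null (t := {(0:ℝ)}) _ (measure_singleton (0:ℝ))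
    intro y hy
    obtain ⟨⟨hy0, hy1⟩, hp1, hp2⟩ := hy
    simp only [Set.mem_singleton_iff]
    by_contra hy00
    have hy0' : 0 < y := lt_of_le_of_ne hy0 (Ne.symm hy00)
    have hpp : p = (p.1, p.2) := rfl
    rcases classify y hy0' hy1 with ⟨a1, a2⟩|⟨a1, a2⟩|⟨a1, a2⟩|⟨a1, a2⟩|⟨a1, a2⟩|⟨a1, a2⟩
    · exact n1 (by rw [hpp, ← hp1, ← hp2, a1, a2])
    · exact n2 (by rw [hpp, ← hp1, ← hp2, a1, a2])
    · exact n3 (by rw [hpp, ← hp1, ← hp2, a1, a2])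
    · exact n4 (by rw [hpp, ← hp1, ← hp2, a1, a2])
    · exact n5 (by rw [hpp, ← hp1, ← hp2, a1, a2])
    · exact n6 (by rw [hpp, ← hp1, ← hp2, a1, a2])
  -- the two unions agree off {0}
  have hsub : (⋃ i ≤ 7, {x ∈ Set.Icc (0:ℝ) 1 | f^[i] x ∈ S}) ⊆
      (⋃ i ≤ k, {x ∈ Set.Icc (0:ℝ) 1 | f^[i] x ∈ S}) := by
    intro x hx
    simp only [Set.mem_iUnion] at hx ⊢
    obtain ⟨i, hi, hxi⟩ := hx
    exact ⟨i, hi.trans hk, hxi⟩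
  rw [symmDiff_of_le hsub]
  apply measure_mono_null _ (measure_singleton (0:ℝ))
  intro x hx
  obtain ⟨hxB, hxA⟩ := hx
  simp only [Set.mem_singleton_iff]
  by_contra hx0
  apply hxA
  simp only [Set.mem_iUnion] at hxB
  obtain ⟨i, hik, hx01, hfS⟩ := hxB
  rw [hS] at hfS
  simp only [Set.mem_iUnion] at hfS
  obtain ⟨p, hpT, _⟩ := hfS
  have hx0' : 0 < x := lt_of_le_of_ne hx01.1 (Ne.symm hx0)
  obtain ⟨K1, K2, K3, K4, K5, K6⟩ := key x hx0' hx01.2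
  simp only [Set.mem_iUnion]
  rcases hp6 p hpT with hp|hp|hp|hp|hp|hp <;> subst hp
  · obtain ⟨i0, hi0, hm⟩ := K1
    refine ⟨i0, hi0, hx01, ?_⟩
    rw [hS]
    exact Set.mem_biUnion hpT
      ⟨⟨by linarith [hm.1], hm.2⟩, (c12 _ hm.1 hm.2).1, (c12 _ hm.1 hm.2).2⟩
  · obtain ⟨i0, hi0, hm⟩ := K2
    refine ⟨i0, hi0, hx01, ?_⟩
    rw [hS]
    exact Set.mem_biUnion hpT
      ⟨⟨by linarith [hm.1], by linarith [hm.2]⟩, (c23 _ hm.1 hm.2).1, (c23 _ hm.1 hm.2).2⟩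
  · obtain ⟨i0, hi0, hm⟩ := K3
    refine ⟨i0, hi0, hx01, ?_⟩
    rw [hS]
    exact Set.mem_biUnion hpT
      ⟨⟨by linarith [hm.1], by linarith [hm.2]⟩, (c34 _ hm.1 hm.2).1, (c34 _ hm.1 hm.2).2⟩
  · obtain ⟨i0, hi0, hm⟩ := K4
    refine ⟨i0, hi0, hx01, ?_⟩
    rw [hS]
    exact Set.mem_biUnion hpT
      ⟨⟨by linarith [hm.1], by linarith [hm.2]⟩, (c45 _ hm.1 hm.2).1, (c45 _ hm.1 hm.2).2⟩
  · obtain ⟨i0, hi0, hm⟩ := K5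
    refine ⟨i0, hi0, hx01, ?_⟩
    rw [hS]
    exact Set.mem_biUnion hpT
      ⟨⟨by linarith [hm.1], by linarith [hm.2]⟩, (c55 _ hm.1 hm.2).1, (c55 _ hm.1 hm.2).2⟩
  · obtain ⟨i0, hi0, hm⟩ := K6
    refine ⟨i0, hi0, hx01, ?_⟩
    rw [hS]
    exact Set.mem_biUnion hpT
      ⟨⟨by linarith [hm.1], by linarith [hm.2]⟩, (c51 _ hm.1 hm.2).1, (c51 _ hm.1 hm.2).2⟩
end
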